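/- arXiv:1402.2807 — 3 statements merged into one kernel-verified Lean document; each statement's English description precedes it below -/
import Mathlib

section
/- Let G be a finite simple graph and a, b two nonadjacent vertices of G. For every edge e' of G, inserting the edge (a,b) increases the truss number of e' by at most 1: φ_{G+(a,b)}(e') ≤ φ_G(e') + 1. -/
open SimpleGraph

variable {V : Type*}

/-- `H` is a `k`-truss of `G`: a connected subgraph with at least one edge in which
every edge lies in at least `k - 2` triangles of `H` (i.e. the endpoints of every edge
have at least `k - 2` common neighbors in `H`). -/
def IsTruss (G : SimpleGraph V) (k : ℕ) (H : G.Subgraph) : Prop :=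
  H.Connected ∧ H.edgeSet.Nonempty ∧
    ∀ a b : V, H.Adj a b → k - 2 ≤ {c : V | H.Adj a c ∧ H.Adj b c}.ncard

/-- The truss number `φ_G(e)` of an edge `e`: the largest `k` such that `e` lies in some
`k`-truss of `G`. -/
noncomputable def trussNumber (G : SimpleGraph V) (e : Sym2 V) : ℕ :=
  sSup {k : ℕ | ∃ H : G.Subgraph, IsTruss G k H ∧ e ∈ H.edgeSet}

/-- The support of the edge `(a, b)` in a subgraph `H`: the number of triangles of `H`
containing it, i.e. the number of common neighbors of `a` and `b` in `H`. -/
noncomputable def suppIn {G : SimpleGraph V} (H : G.Subgraph) (a b : V) : ℕ :=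
  {c : V | H.Adj a c ∧ H.Adj b c}.ncard

/-- The support of the edge `(a, b)` in `G`. -/
noncomputable def suppG (G : SimpleGraph V) (a b : V) : ℕ :=
  {c : V | G.Adj a c ∧ G.Adj b c}.ncard

/-- `S_{a,b}`: the common neighbors of `a` and `b` in `G`. -/
def commonNbrs (G : SimpleGraph V) (a b : V) : Set V :=
  {c : V | G.Adj a c ∧ G.Adj b c}

/-- `E_{S_{a,b} ↔ {a,b}}`: the edges of `G` joining a common neighbor of `a` and `b`
to `a` or to `b`. -/
def sideEdges (G : SimpleGraph V) (a b : V) : Set (Sym2 V) :=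
  {e | ∃ c, G.Adj a c ∧ G.Adj b c ∧ (e = s(a, c) ∨ e = s(b, c))}

/-- `k_min((a,b))`: minimum truss number among the edges of `E_{S_{a,b} ↔ {a,b}}`. -/
noncomputable def kmin (G : SimpleGraph V) (a b : V) : ℕ :=
  sInf (trussNumber G '' sideEdges G a b)

/-- `k_max((a,b))`: maximum truss number among the edges of `E_{S_{a,b} ↔ {a,b}}`. -/
noncomputable def kmax (G : SimpleGraph V) (a b : V) : ℕ :=
  sSup (trussNumber G '' sideEdges G a b)

/-- `G + (a,b)`: the graph obtained from `G` by inserting the edge `(a, b)`. -/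
def insertEdge (G : SimpleGraph V) (a b : V) : SimpleGraph V :=
  G ⊔ fromEdgeSet {s(a, b)}

/-!
A `k`-truss `H` of `G + (a,b)` with `k ≥ 3` becomes a `(k-1)`-truss of `G` once the edge
`(a,b)` is removed. It stays connected, because `(a,b)` lies in a triangle `a c b` of `H`
and the path `a - c - b` survives. An edge `(u,v)` loses at most one triangle, since a lost
common neighbor `c` satisfies `{u,c} = {a,b}` or `{v,c} = {a,b}`, and such a `c` is unique.
-/

lemma SimpleGraph.Connected.of_adj_reachable {W : Type*} {G G' : SimpleGraph W}
    (hG : G.Connected) (h : ∀ u v, G.Adj u v → G'.Reachable u v) : G'.Connected := by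
  have hle : G.Reachable ≤ G'.Reachable := by
    rw [reachable_eq_reflTransGen, reachable_eq_reflTransGen]
    exact Relation.reflTransGen_closed fun u v huv =>
      (reachable_iff_reflTransGen u v).1 (h u v huv)
  have := hG.nonempty
  exact ⟨fun u v => hle u v (hG u v)⟩

namespace IsTruss

variable {G : SimpleGraph V} {k : ℕ} {H : G.Subgraph}

lemma le_trussNumber [Finite V] {e : Sym2 V} (hH : IsTruss G k H) (he : e ∈ H.edgeSet) :
    k ≤ trussNumber G e := by
  refine le_csSup ⟨Nat.card V + 2, ?_⟩ ⟨H, hH, he⟩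
  rintro k ⟨H, ⟨-, ⟨e, he⟩, hk⟩, -⟩
  induction e using Sym2.inductionOn with
  | hf x y =>
    have := hk x y he
    have := Set.ncard_le_card {c | H.Adj x c ∧ H.Adj y c}
    omega

lemma exists_common_adj (hH : IsTruss G k H) (hk : 3 ≤ k) {u v : V} (huv : H.Adj u v) :
    ∃ c, H.Adj u c ∧ H.Adj v c :=
  Set.nonempty_of_ncard_ne_zero (s := {c | H.Adj u c ∧ H.Adj v c}) (by
    have := hH.2.2 u v huv; omega)

end IsTruss

lemma two_le_trussNumber [Finite V] {G : SimpleGraph V} {e : Sym2 V} (he : e ∈ G.edgeSet) :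
    2 ≤ trussNumber G e := by
  induction e using Sym2.inductionOn with
  | hf x y =>
    rw [mem_edgeSet] at he
    refine IsTruss.le_trussNumber (H := G.subgraphOfAdj he)
      ⟨Subgraph.subgraphOfAdj_connected he, ⟨s(x, y), ?_⟩, fun _ _ _ => Nat.zero_le _⟩ ?_
      <;> simp

namespace SimpleGraph.Subgraph

variable {G : SimpleGraph V} {a b : V}

def deleteInsertedEdge (H : (insertEdge G a b).Subgraph) : G.Subgraph where
  verts := H.verts
  Adj u v := H.Adj u v ∧ s(u, v) ≠ s(a, b)
  adj_sub h := (H.adj_sub h.1).resolve_right fun h' => h.2 h'.1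
  edge_vert h := H.edge_vert h.1
  symm := ⟨fun _ _ h => ⟨h.1.symm, by rw [Sym2.eq_swap]; exact h.2⟩⟩

variable {H : (insertEdge G a b).Subgraph}

lemma mem_edgeSet_deleteInsertedEdge {e : Sym2 V} :
    e ∈ H.deleteInsertedEdge.edgeSet ↔ e ∈ H.edgeSet ∧ e ≠ s(a, b) := by
  induction e using Sym2.inductionOn with
  | hf x y => rfl

lemma Connected.deleteInsertedEdge (hH : H.Connected)
    (htri : ∀ u v, H.Adj u v → ∃ c, H.Adj u c ∧ H.Adj v c) :
    H.deleteInsertedEdge.Connected := by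
  rw [Subgraph.connected_iff'] at hH ⊢
  refine hH.of_adj_reachable ?_
  rintro ⟨u, hu⟩ ⟨v, hv⟩ (huv : H.Adj u v)
  by_cases hab : s(u, v) = s(a, b)
  · obtain ⟨c, huc, hvc⟩ := htri u v huv
    have hc : c ∈ H.deleteInsertedEdge.verts := H.edge_vert huc.symm
    have hu : H.deleteInsertedEdge.coe.Adj ⟨u, hu⟩ ⟨c, hc⟩ :=
      ⟨huc, fun h => hvc.ne (Sym2.congr_right.1 (hab.trans h.symm))⟩
    have hv : H.deleteInsertedEdge.coe.Adj ⟨c, hc⟩ ⟨v, hv⟩ :=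
      ⟨hvc.symm, fun h => huc.ne (Sym2.congr_left.1 (hab.trans h.symm))⟩
    exact hu.reachable.trans hv.reachable
  · exact Adj.reachable (G := H.deleteInsertedEdge.coe) ⟨huv, hab⟩

lemma suppIn_le_suppIn_deleteInsertedEdge_add_one [Finite V] (u v : V) :
    suppIn H u v ≤ suppIn H.deleteInsertedEdge u v + 1 := by
  set lost := {c | H.Adj u c ∧ H.Adj v c ∧ (s(u, c) = s(a, b) ∨ s(v, c) = s(a, b))}
  have hlost : lost.ncard ≤ 1 := by
    refine (Set.ncard_le_one).2 fun c ⟨huc, hvc, hc⟩ c' ⟨_, _, hc'⟩ => ?_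
    rcases hc with hc | hc <;> rcases hc' with hc' | hc'
    · exact Sym2.congr_right.1 (hc.trans hc'.symm)
    · rcases Sym2.eq_iff.1 (hc.trans hc'.symm) with ⟨-, rfl⟩ | ⟨-, rfl⟩
      · rfl
      · exact absurd hvc (H.loopless.irrefl _)
    · rcases Sym2.eq_iff.1 (hc.trans hc'.symm) with ⟨-, rfl⟩ | ⟨-, rfl⟩
      · rfl
      · exact absurd huc (H.loopless.irrefl _)
    · exact Sym2.congr_right.1 (hc.trans hc'.symm)
  have hsub : {c | H.Adj u c ∧ H.Adj v c} \ lost ⊆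
      {c | H.deleteInsertedEdge.Adj u c ∧ H.deleteInsertedEdge.Adj v c} := by
    rintro c ⟨⟨huc, hvc⟩, hc⟩
    exact ⟨⟨huc, fun h => hc ⟨huc, hvc, .inl h⟩⟩, hvc,
      fun h => hc ⟨huc, hvc, .inr h⟩⟩
  calc suppIn H u v ≤ ({c | H.Adj u c ∧ H.Adj v c} \ lost).ncard + lost.ncard :=
        Set.ncard_le_ncard_sdiff_add_ncard _ _
    _ ≤ suppIn H.deleteInsertedEdge u v + 1 :=
        add_le_add (Set.ncard_le_ncard hsub) hlost

end SimpleGraph.Subgraph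

lemma IsTruss.deleteInsertedEdge [Finite V] {G : SimpleGraph V} {a b : V} {k : ℕ}
    {H : (insertEdge G a b).Subgraph} (hH : IsTruss (insertEdge G a b) k H) (hk : 3 ≤ k)
    {e : Sym2 V} (he : e ∈ H.deleteInsertedEdge.edgeSet) :
    IsTruss G (k - 1) H.deleteInsertedEdge := by
  refine ⟨hH.1.deleteInsertedEdge fun _ _ => hH.exists_common_adj hk, ⟨e, he⟩,
    fun u v huv => ?_⟩
  have := hH.2.2 u v huv.1
  have := H.suppIn_le_suppIn_deleteInsertedEdge_add_one u v
  simp only [suppIn] at this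
  omega

theorem stmt4_general [Fintype V] (G : SimpleGraph V) (a b : V)
    (hnadj : ¬ G.Adj a b) (e' : Sym2 V) (he' : e' ∈ G.edgeSet) :
    trussNumber (insertEdge G a b) e' ≤ trussNumber G e' + 1 := by
  have hne : e' ≠ s(a, b) := by rintro rfl; exact hnadj he'
  refine csSup_le' fun k ⟨H, hH, heH⟩ => ?_
  by_cases hk : k ≤ 2
  · have := two_le_trussNumber he'
    omega
  · have he : e' ∈ H.deleteInsertedEdge.edgeSet :=
      Subgraph.mem_edgeSet_deleteInsertedEdge.2 ⟨heH, hne⟩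
    have := (hH.deleteInsertedEdge (by omega) he).le_trussNumber he
    omega

theorem stmt4 [Fintype V] (G : SimpleGraph V) (a b : V) (hab : a ≠ b)
    (hnadj : ¬ G.Adj a b) (e' : Sym2 V) (he' : e' ∈ G.edgeSet) :
    trussNumber (insertEdge G a b) e' ≤ trussNumber G e' + 1 :=
  stmt4_general G a b hnadj e' he'
end

section
/- Let G be a finite simple graph and (a,b) an edge of G with S_{a,b} ≠ ∅ and k_min((a,b)) ≤ φ_G((a,b)). Then every edge e' ≠ (a,b) of G whose truss number changes after deleting (a,b) (i.e., φ_{G−(a,b)}(e') ≠ φ_G(e')) satisfies k_min((a,b)) ≤ φ_G(e') ≤ φ_G((a,b)). -/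
open SimpleGraph

variable {V : Type*}

/-!
Deleting an edge can only lower truss numbers. Let `e ≠ ab` with `φ_{G-ab}(e) < φ_G(e) = k`.
A `k`-truss `H` of `G` through `e` that avoided `ab` would be a `k`-truss of `G - ab`, so `H`
contains `ab` and `k ≤ φ_G(ab)`. If moreover `k < k_min(ab)`, glue to `H` a `(k+1)`-truss through
every edge joining a common neighbour of `a, b` to `a` or `b`. In the union, the only edges that
can lose a triangle when `ab` is removed are these side edges, each of which has a triangle to
spare, and a common neighbour `c` keeps the union connected through `a - c - b`. Removing `ab`
therefore leaves a `k`-truss of `G - ab` through `e`, a contradiction.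
-/

namespace SimpleGraph.Subgraph

variable {G G' : SimpleGraph V}

def transfer (H : G.Subgraph) (h : ∀ ⦃x y⦄, H.Adj x y → G'.Adj x y) : G'.Subgraph where
  verts := H.verts
  Adj := H.Adj
  adj_sub hxy := h hxy
  edge_vert := H.edge_vert
  symm := H.symm

lemma connected_sup_iSup {ι : Type*} {H : G.Subgraph} {T : ι → G.Subgraph} (hH : H.Connected)
    (hT : ∀ i, (T i).Connected) (hmeet : ∀ i, ((T i).verts ∩ H.verts).Nonempty) :
    (H ⊔ ⨆ i, T i).Connected := by
  rw [Subgraph.connected_iff', connected_iff_exists_forall_reachable]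
  obtain ⟨u, hu⟩ := hH.nonempty
  have hHle : H ≤ H ⊔ ⨆ i, T i := le_sup_left
  refine ⟨⟨u, hHle.1 hu⟩, ?_⟩
  rintro ⟨v, hv | hv⟩
  · exact (hH ⟨u, hu⟩ ⟨v, hv⟩).map (inclusion hHle)
  · obtain ⟨i, hi⟩ := Set.mem_iUnion.1 (verts_iSup ▸ hv)
    obtain ⟨w, hwT, hwH⟩ := hmeet i
    have hTle : T i ≤ H ⊔ ⨆ i, T i := le_sup_of_le_right (le_iSup T i)
    exact ((hH ⟨u, hu⟩ ⟨w, hwH⟩).map (inclusion hHle)).trans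
      ((hT i ⟨w, hwT⟩ ⟨v, hi⟩).map (inclusion hTle))

lemma Connected.deleteEdges_of_adj_of_adj {H : G.Subgraph} {a b c : V} (hH : H.Connected)
    (hac : H.Adj a c) (hbc : H.Adj b c) : (H.deleteEdges {s(a, b)}).Connected := by
  set K := H.deleteEdges {s(a, b)}
  have hKadj : ∀ ⦃x y : V⦄, H.Adj x y → s(x, y) ≠ s(a, b) → K.Adj x y := fun x y hxy hne =>
    (deleteEdges_adj _ _ _).2 ⟨hxy, hne⟩
  have hab (ha : a ∈ K.verts) (hb : b ∈ K.verts) : K.coe.Reachable ⟨a, ha⟩ ⟨b, hb⟩ := by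
    have hc : c ∈ K.verts := H.edge_vert hac.symm
    have hKac : K.coe.Adj ⟨a, ha⟩ ⟨c, hc⟩ := hKadj hac fun h => by
      rcases Sym2.eq_iff.1 h with ⟨-, h⟩ | ⟨-, h⟩
      exacts [hbc.ne h.symm, hac.ne h.symm]
    have hKbc : K.coe.Adj ⟨b, hb⟩ ⟨c, hc⟩ := hKadj hbc fun h => by
      rcases Sym2.eq_iff.1 h with ⟨-, h⟩ | ⟨-, h⟩
      exacts [hbc.ne h.symm, hac.ne h.symm]
    exact hKac.reachable.trans hKbc.reachable.symm
  have hle : ∀ x y : H.verts, H.coe.Adj x y → K.coe.Reachable x y := by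
    rintro ⟨x, hx⟩ ⟨y, hy⟩ (hxy : H.Adj x y)
    by_cases hne : s(x, y) = s(a, b)
    · rcases Sym2.eq_iff.1 hne with ⟨rfl, rfl⟩ | ⟨rfl, rfl⟩
      · exact hab hx hy
      · exact (hab hy hx).symm
    · exact Adj.reachable (G := K.coe) (u := ⟨x, hx⟩) (v := ⟨y, hy⟩) (hKadj hxy hne)
  rw [Subgraph.connected_iff'] at hH ⊢
  refine (connected_iff _).2 ⟨fun x y => (reachable_iff_reflTransGen _ _).2 ?_, hH.nonempty⟩
  exact Relation.reflTransGen_closed (fun u v h => (reachable_iff_reflTransGen _ _).1 (hle u v h))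
    _ _ ((reachable_iff_reflTransGen _ _).1 (hH.preconnected x y))

lemma edgeSet_deleteEdges (H : G.Subgraph) (s : Set (Sym2 V)) :
    (H.deleteEdges s).edgeSet = H.edgeSet \ s := by
  ext e
  induction e using Sym2.ind
  simp

end SimpleGraph.Subgraph

section Truss

variable {G G' : SimpleGraph V} {H H' : G.Subgraph} {k j : ℕ} {a b c x y : V} {e : Sym2 V}

lemma IsTruss.le_suppIn (hH : IsTruss G k H) (hxy : H.Adj x y) : k - 2 ≤ suppIn H x y :=
  hH.2.2 x y hxy

lemma IsTruss.of_le (hH : IsTruss G k H) (hjk : j ≤ k) : IsTruss G j H :=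
  ⟨hH.1, hH.2.1, fun _ _ hxy => (Nat.sub_le_sub_right hjk 2).trans (hH.le_suppIn hxy)⟩

lemma IsTruss.transfer (hH : IsTruss G k H) (h : ∀ ⦃x y⦄, H.Adj x y → G'.Adj x y) :
    IsTruss G' k (H.transfer h) :=
  ⟨⟨hH.1.coe⟩, hH.2.1, hH.2.2⟩

lemma isTruss_two_subgraphOfAdj (hxy : G.Adj x y) : IsTruss G 2 (G.subgraphOfAdj hxy) :=
  ⟨Subgraph.subgraphOfAdj_connected hxy, ⟨s(x, y), by simp⟩, fun _ _ _ => Nat.zero_le _⟩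

lemma bddAbove_setOf_isTruss [Finite V] (G : SimpleGraph V) (e : Sym2 V) :
    BddAbove {k | ∃ H : G.Subgraph, IsTruss G k H ∧ e ∈ H.edgeSet} := by
  refine ⟨Nat.card V + 2, ?_⟩
  rintro k ⟨H, hH, -⟩
  obtain ⟨f, hf⟩ := hH.2.1
  induction f using Sym2.ind with
  | _ x y =>
    have := hH.le_suppIn (x := x) (y := y) hf
    have := Set.ncard_le_card {c | H.Adj x c ∧ H.Adj y c}
    unfold suppIn at *
    omega

lemma le_trussNumber [Finite V] (hH : IsTruss G k H) (he : e ∈ H.edgeSet) :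
    k ≤ trussNumber G e :=
  le_csSup (bddAbove_setOf_isTruss G e) ⟨H, hH, he⟩

lemma exists_isTruss_trussNumber [Finite V] (he : e ∈ G.edgeSet) :
    ∃ H : G.Subgraph, IsTruss G (trussNumber G e) H ∧ e ∈ H.edgeSet := by
  induction e using Sym2.ind with
  | _ x y =>
    rw [mem_edgeSet] at he
    exact Nat.sSup_mem (s := {k | ∃ H : G.Subgraph, IsTruss G k H ∧ s(x, y) ∈ H.edgeSet})
      ⟨2, G.subgraphOfAdj he, isTruss_two_subgraphOfAdj he, by simp⟩ (bddAbove_setOf_isTruss G _)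

lemma trussNumber_mono [Finite V] (h : G ≤ G') (e : Sym2 V) :
    trussNumber G e ≤ trussNumber G' e :=
  csSup_le' <| by
    rintro k ⟨H, hH, he⟩
    exact le_trussNumber (hH.transfer fun _ _ hxy => h (H.adj_sub hxy)) he

lemma le_trussNumber_deleteEdges [Finite V] {s : Set (Sym2 V)} (hH : IsTruss G k H)
    (he : e ∈ H.edgeSet) (hs : Disjoint H.edgeSet s) : k ≤ trussNumber (G.deleteEdges s) e :=
  le_trussNumber (hH.transfer fun _ _ hxy =>
    (deleteEdges_adj ..).2 ⟨H.adj_sub hxy, Set.disjoint_left.1 hs hxy⟩) he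

lemma suppIn_mono [Finite V] (h : H ≤ H') (x y : V) : suppIn H x y ≤ suppIn H' x y :=
  Set.ncard_le_ncard fun _ hc => ⟨h.2 hc.1, h.2 hc.2⟩

lemma suppIn_le_suppIn_deleteEdges_add_one [Finite V] (H : G.Subgraph) (hxy : x ≠ y)
    (hne : s(x, y) ≠ s(a, b)) : suppIn H x y ≤ suppIn (H.deleteEdges {s(a, b)}) x y + 1 := by
  set L := {c | s(x, c) = s(a, b) ∨ s(y, c) = s(a, b)}
  -- two lost neighbours `c ≠ c'` come from different endpoints of `xy`, forcing `{x, y} = {a, b}`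
  have hL : L.ncard ≤ 1 := by
    rw [Set.ncard_le_one]
    simp only [L, Set.mem_ofPred_eq, Sym2.eq_iff] at *
    grind
  have hsub : {c | H.Adj x c ∧ H.Adj y c} ⊆
      {c | (H.deleteEdges {s(a, b)}).Adj x c ∧ (H.deleteEdges {s(a, b)}).Adj y c} ∪ L := by
    intro c ⟨hxc, hyc⟩
    by_cases hc : c ∈ L
    · exact Or.inr hc
    · obtain ⟨hxc', hyc'⟩ := not_or.1 hc
      exact Or.inl ⟨⟨hxc, hxc'⟩, hyc, hyc'⟩
  calc suppIn H x y ≤ _ := Set.ncard_le_ncard hsub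
    _ ≤ _ := Set.ncard_union_le _ _
    _ ≤ _ := Nat.add_le_add_left hL _

lemma suppIn_le_suppIn_deleteEdges [Finite V] (hxy : H.Adj x y)
    (hside : s(x, y) ∉ sideEdges G a b) : suppIn H x y ≤ suppIn (H.deleteEdges {s(a, b)}) x y := by
  have hside_of_lost : ∀ ⦃u v c⦄, H.Adj u v → H.Adj v c → s(u, c) = s(a, b) →
      s(u, v) ∈ sideEdges G a b := by
    intro u v c huv hvc h
    rcases Sym2.eq_iff.1 h with ⟨rfl, rfl⟩ | ⟨rfl, rfl⟩
    · exact ⟨v, huv.adj_sub, hvc.symm.adj_sub, Or.inl rfl⟩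
    · exact ⟨v, hvc.symm.adj_sub, huv.adj_sub, Or.inr rfl⟩
  refine Set.ncard_le_ncard fun c ⟨hxc, hyc⟩ => ⟨⟨hxc, fun h => hside (hside_of_lost hxy hyc h)⟩,
    ⟨hyc, fun h => hside (Sym2.eq_swap ▸ hside_of_lost hxy.symm hxc h)⟩⟩

lemma sideEdges_subset_edgeSet : sideEdges G a b ⊆ G.edgeSet := by
  rintro _ ⟨c, hac, hbc, rfl | rfl⟩ <;> assumption

lemma exists_isTruss_sup_sideEdges [Finite V] (hH : IsTruss G k H) (hab : H.Adj a b)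
    (hside : ∀ e ∈ sideEdges G a b, k < trussNumber G e) :
    ∃ H₂ : G.Subgraph, H ≤ H₂ ∧ IsTruss G k H₂ ∧
      ∀ x y, s(x, y) ∈ sideEdges G a b → H₂.Adj x y ∧ k - 1 ≤ suppIn H₂ x y := by
  have hT (e : sideEdges G a b) :
      ∃ T : G.Subgraph, IsTruss G (k + 1) T ∧ (e : Sym2 V) ∈ T.edgeSet := by
    obtain ⟨T, hT, heT⟩ := exists_isTruss_trussNumber (sideEdges_subset_edgeSet e.2)
    exact ⟨T, hT.of_le (hside e e.2), heT⟩
  choose T hT heT using hT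
  have hTle (e) : T e ≤ H ⊔ ⨆ e, T e := le_sup_of_le_right (le_iSup T e)
  have hTsupp (e) ⦃x y⦄ (hxy : (T e).Adj x y) : k - 1 ≤ suppIn (H ⊔ ⨆ e, T e) x y := by
    have := (hT e).le_suppIn hxy
    have := suppIn_mono (hTle e) x y
    omega
  have hmeet (e : sideEdges G a b) : ((T e).verts ∩ H.verts).Nonempty := by
    obtain ⟨e, c, -, -, rfl | rfl⟩ := e
    · exact ⟨a, (T _).mem_verts_of_mem_edge (heT _) (Sym2.mem_mk_left _ _), H.edge_vert hab⟩
    · exact ⟨b, (T _).mem_verts_of_mem_edge (heT _) (Sym2.mem_mk_left _ _), H.edge_vert hab.symm⟩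
  refine ⟨H ⊔ ⨆ e, T e, le_sup_left, ⟨Subgraph.connected_sup_iSup hH.1 (fun e => (hT e).1) hmeet,
    hH.2.1.mono (Subgraph.edgeSet_mono le_sup_left), fun x y hxy => ?_⟩, fun x y hxy =>
    ⟨(hTle ⟨_, hxy⟩).2 (heT ⟨_, hxy⟩), hTsupp _ (heT ⟨_, hxy⟩)⟩⟩
  rcases Subgraph.sup_adj.1 hxy with hxy | hxy
  · exact (hH.le_suppIn hxy).trans (suppIn_mono le_sup_left x y)
  · obtain ⟨e, he⟩ := Subgraph.iSup_adj.1 hxy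
    exact (Nat.sub_le_sub_left (by omega) k).trans (hTsupp e he)

lemma IsTruss.deleteEdges_of_sideEdges [Finite V] (hH : IsTruss G k H)
    (hc : c ∈ commonNbrs G a b)
    (hside : ∀ x y, s(x, y) ∈ sideEdges G a b → H.Adj x y ∧ k - 1 ≤ suppIn H x y) :
    IsTruss G k (H.deleteEdges {s(a, b)}) := by
  have hac := (hside a c ⟨c, hc.1, hc.2, Or.inl rfl⟩).1
  have hbc := (hside b c ⟨c, hc.1, hc.2, Or.inr rfl⟩).1
  refine ⟨hH.1.deleteEdges_of_adj_of_adj hac hbc,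
    ⟨s(a, c), (Subgraph.deleteEdges_adj _ _ _).2
      ⟨hac, fun h => hbc.ne (Sym2.congr_right.1 h).symm⟩⟩,
    fun x y hxy => ?_⟩
  obtain ⟨hxy, hne⟩ := (Subgraph.deleteEdges_adj _ _ _).1 hxy
  show k - 2 ≤ suppIn _ x y
  by_cases hxy_side : s(x, y) ∈ sideEdges G a b
  · have := (hside x y hxy_side).2
    have := suppIn_le_suppIn_deleteEdges_add_one H hxy.ne hne
    omega
  · exact (hH.le_suppIn hxy).trans (suppIn_le_suppIn_deleteEdges hxy hxy_side)

lemma le_trussNumber_deleteEdges_of_lt_sideEdges [Finite V] (hH : IsTruss G k H)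
    (he : e ∈ H.edgeSet) (hne : e ≠ s(a, b)) (hab : H.Adj a b) (hS : (commonNbrs G a b).Nonempty)
    (hside : ∀ e ∈ sideEdges G a b, k < trussNumber G e) :
    k ≤ trussNumber (G.deleteEdges {s(a, b)}) e := by
  obtain ⟨H₂, hle, hH₂, hside₂⟩ := exists_isTruss_sup_sideEdges hH hab hside
  obtain ⟨c, hc⟩ := hS
  refine le_trussNumber_deleteEdges (hH₂.deleteEdges_of_sideEdges hc hside₂) ?_ ?_
  · rw [Subgraph.edgeSet_deleteEdges]
    exact ⟨Subgraph.edgeSet_mono hle he, hne⟩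
  · rw [Subgraph.edgeSet_deleteEdges]
    exact Set.disjoint_sdiff_left

end Truss

theorem stmt7_general [Fintype V] (G : SimpleGraph V) (a b : V)
    (hS : (commonNbrs G a b).Nonempty) :
    ∀ e' ∈ G.edgeSet, e' ≠ s(a, b) →
      trussNumber (G.deleteEdges {s(a, b)}) e' ≠ trussNumber G e' →
      kmin G a b ≤ trussNumber G e' ∧ trussNumber G e' ≤ trussNumber G s(a, b) := by
  intro e he hne hchange
  have hlt : trussNumber (G.deleteEdges {s(a, b)}) e < trussNumber G e :=
    (trussNumber_mono (G.deleteEdges_le _) e).lt_of_ne hchange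
  obtain ⟨H, hH, heH⟩ := exists_isTruss_trussNumber he
  have habH : s(a, b) ∈ H.edgeSet := by
    by_contra h
    exact hlt.not_ge (le_trussNumber_deleteEdges hH heH (Set.disjoint_singleton_right.2 h))
  refine ⟨?_, le_trussNumber hH habH⟩
  by_contra! hkmin
  have hside (e₀) (he₀ : e₀ ∈ sideEdges G a b) : trussNumber G e < trussNumber G e₀ :=
    hkmin.trans_le (Nat.sInf_le ⟨e₀, he₀, rfl⟩)
  exact hlt.not_ge (le_trussNumber_deleteEdges_of_lt_sideEdges hH heH hne habH hS hside)

theorem stmt7 [Fintype V] (G : SimpleGraph V) (a b : V) (hab : G.Adj a b)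
    (hS : (commonNbrs G a b).Nonempty) (hk : kmin G a b ≤ trussNumber G s(a, b)) :
    ∀ e' ∈ G.edgeSet, e' ≠ s(a, b) →
      trussNumber (G.deleteEdges {s(a, b)}) e' ≠ trussNumber G e' →
      kmin G a b ≤ trussNumber G e' ∧ trussNumber G e' ≤ trussNumber G s(a, b) :=
  stmt7_general G a b hS
end

section
/- Let G be a finite simple graph and a, b two nonadjacent vertices of G. Every edge e' of G with φ_G(e') > |S_{a,b}| + 1 is unaffected by inserting the edge (a,b): φ_{G+(a,b)}(e') = φ_G(e'). -/
open SimpleGraph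

variable {V : Type*}

/-- Transport a subgraph along a graph inclusion. -/
def liftSub {G G' : SimpleGraph V} (hle : G ≤ G') (H : G.Subgraph) : G'.Subgraph where
  verts := H.verts
  Adj := H.Adj
  adj_sub h := hle (H.adj_sub h)
  edge_vert := H.edge_vert
  symm := H.symm

lemma liftSub_truss {G G' : SimpleGraph V} (hle : G ≤ G') (H : G.Subgraph) (k : ℕ)
    (hH : IsTruss G k H) : IsTruss G' k (liftSub hle H) := ⟨⟨hH.1.coe⟩, hH.2⟩

lemma truss_set_bddAbove [Fintype V] (G : SimpleGraph V) (e : Sym2 V) :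
    BddAbove {k : ℕ | ∃ H : G.Subgraph, IsTruss G k H ∧ e ∈ H.edgeSet} := by
  refine ⟨Fintype.card V + 2, ?_⟩
  rintro k ⟨H, ⟨_, ⟨f, hf⟩, hsupp⟩, _⟩
  induction f using Sym2.ind with
  | _ x y =>
    rw [SimpleGraph.Subgraph.mem_edgeSet] at hf
    have h1 := hsupp x y hf
    have h2 : {c : V | H.Adj x c ∧ H.Adj y c}.ncard ≤ Fintype.card V := by
      calc {c : V | H.Adj x c ∧ H.Adj y c}.ncard
          ≤ (Set.univ : Set V).ncard := Set.ncard_le_ncard (Set.subset_univ _) Set.finite_univ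
        _ = Fintype.card V := by rw [Set.ncard_univ, Nat.card_eq_fintype_card]
    omega

lemma truss_set_nonempty (G : SimpleGraph V) (e : Sym2 V) (he : e ∈ G.edgeSet) :
    (2 : ℕ) ∈ {k : ℕ | ∃ H : G.Subgraph, IsTruss G k H ∧ e ∈ H.edgeSet} := by
  induction e using Sym2.ind with
  | _ x y =>
    rw [SimpleGraph.mem_edgeSet] at he
    refine ⟨G.subgraphOfAdj he, ⟨SimpleGraph.Subgraph.subgraphOfAdj_connected he, ⟨s(x,y), ?_⟩, ?_⟩, ?_⟩
    · simp [SimpleGraph.Subgraph.mem_edgeSet]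
    · intro u v _; simp
    · simp [SimpleGraph.Subgraph.mem_edgeSet]

theorem stmt14 [Fintype V] (G : SimpleGraph V) (a b : V) (hab : a ≠ b)
    (hnadj : ¬ G.Adj a b) (e' : Sym2 V) (he' : e' ∈ G.edgeSet)
    (h : (commonNbrs G a b).ncard + 1 < trussNumber G e') :
    trussNumber (insertEdge G a b) e' = trussNumber G e' := by
  have hle : G ≤ insertEdge G a b := le_sup_left
  set S := {k : ℕ | ∃ H : G.Subgraph, IsTruss G k H ∧ e' ∈ H.edgeSet}
  set S' := {k : ℕ | ∃ H : (insertEdge G a b).Subgraph, IsTruss (insertEdge G a b) k H ∧ e' ∈ H.edgeSet}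
  have hne : S.Nonempty := ⟨2, truss_set_nonempty G e' he'⟩
  have hsub : S ⊆ S' := by
    rintro k ⟨H, hH, heH⟩
    exact ⟨liftSub hle H, liftSub_truss hle H k hH, heH⟩
  have hge : trussNumber G e' ≤ trussNumber (insertEdge G a b) e' :=
    csSup_le_csSup (truss_set_bddAbove _ e') hne hsub
  have hadj_iff : ∀ x y : V, (insertEdge G a b).Adj x y ↔ G.Adj x y ∨ (s(x,y) = s(a,b) ∧ x ≠ y) := by
    intro x y
    simp [insertEdge, SimpleGraph.fromEdgeSet_adj]
  refine le_antisymm ?_ hge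
  refine csSup_le (hne.mono hsub) ?_
  rintro k ⟨H, hH, heH⟩
  by_cases hmem : H.Adj a b
  · -- edge (a,b) used: bound k by ncard + 2
    have hsupp := hH.2.2 a b hmem
    have hsubset : {c : V | H.Adj a c ∧ H.Adj b c} ⊆ commonNbrs G a b := by
      rintro c ⟨hac, hbc⟩
      have hca : a ≠ c := ((insertEdge G a b).ne_of_adj (H.adj_sub hac))
      have hcb : b ≠ c := ((insertEdge G a b).ne_of_adj (H.adj_sub hbc))
      have h1 : G.Adj a c := by
        rcases (hadj_iff a c).1 (H.adj_sub hac) with hg | ⟨hs, _⟩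
        · exact hg
        · exfalso
          rcases Sym2.eq_iff.1 hs with ⟨_, rfl⟩ | ⟨rfl, rfl⟩
          · exact hcb rfl
          · exact hca rfl
      have h2 : G.Adj b c := by
        rcases (hadj_iff b c).1 (H.adj_sub hbc) with hg | ⟨hs, _⟩
        · exact hg
        · exfalso
          rcases Sym2.eq_iff.1 hs with ⟨rfl, rfl⟩ | ⟨_, rfl⟩
          · exact hab rfl
          · exact hca rfl
      exact ⟨h1, h2⟩
    have hle2 : {c : V | H.Adj a c ∧ H.Adj b c}.ncard ≤ (commonNbrs G a b).ncard :=
      Set.ncard_le_ncard hsubset (Set.toFinite _)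
    omega
  · -- edge (a,b) not used: H is a subgraph of G
    have hGadj : ∀ x y : V, H.Adj x y → G.Adj x y := by
      intro x y hxy
      rcases (hadj_iff x y).1 (H.adj_sub hxy) with hg | ⟨hs, _⟩
      · exact hg
      · exfalso
        rcases Sym2.eq_iff.1 hs with ⟨rfl, rfl⟩ | ⟨rfl, rfl⟩
        · exact hmem hxy
        · exact hmem hxy.symm
    let H' : G.Subgraph :=
      { verts := H.verts, Adj := H.Adj, adj_sub := fun h => hGadj _ _ h,
        edge_vert := H.edge_vert, symm := H.symm }
    have hk : k ∈ S := ⟨H', ⟨⟨hH.1.coe⟩, hH.2⟩, heH⟩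
    exact le_csSup (truss_set_bddAbove G e') hk
end
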